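/- arXiv:2005.07319 — 3 statements merged into one kernel-verified Lean document; each statement's English description precedes it below -/
import Mathlib

section
/- For integers k_1, ..., k_r with k_r = 1 and real x with |x| < 1, the derivative of the multiple polylogarithm satisfies d/dx Li_{k_1,...,k_{r-1},1}(x) = (1/(1-x)) · Li_{k_1,...,k_{r-1}}(x). -/
open scoped BigOperators

/-- Coefficient of `x^N` in the multiple polylogarithm, with the index list
given in *reverse* order (`k_r` first). -/
noncomputable def mpolylogCoeff : List ℤ → ℕ → ℝ
  | [], 0 => 1
  | [], _ + 1 => 0
  | _ :: _, 0 => 0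
  | k :: ks, (n + 1) =>
      (∑ j ∈ Finset.range (n + 1), mpolylogCoeff ks j) / ((n + 1 : ℕ) : ℝ) ^ k

/-- Multiple polylogarithm `Li_{k_1,…,k_r}(x) = ∑_{0<n_1<⋯<n_r} x^{n_r}/(n_1^{k_1}⋯n_r^{k_r})`,
where the list `ks = [k_1,…,k_r]`. -/
noncomputable def mpolylog (ks : List ℤ) (x : ℝ) : ℝ :=
  ∑' n : ℕ, mpolylogCoeff ks.reverse n * x ^ n

/-!
Write `Li_{ks,1}(x) = ∑ cₙ xⁿ` and `Li_{ks}(x) = ∑ aₙ xⁿ`. The recursion defining the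
coefficients says `(n + 1) c_{n+1} = a₀ + ⋯ + aₙ`, so the termwise derivative
`∑ (n + 1) c_{n+1} xⁿ` is the Cauchy product of `∑ aₙ xⁿ` with the geometric series `1 / (1 - x)`.
Termwise differentiation is legitimate on `|x| < 1` because the coefficients grow at most
polynomially in `n`.
-/

open Asymptotics Filter Finset

theorem hasDerivAt_tsum_mul_pow {𝕜 : Type*} [RCLike 𝕜] {c : ℕ → 𝕜} {k : ℕ}
    (hc : c =O[atTop] fun n ↦ (n : 𝕜) ^ k) {x : 𝕜} (hx : ‖x‖ < 1) :
    HasDerivAt (fun y ↦ ∑' n, c n * y ^ n) (∑' n, (n + 1) * c (n + 1) * x ^ n) x := by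
  obtain ⟨r, hxr, hr1⟩ := exists_between hx
  have hr0 : 0 < r := (norm_nonneg x).trans_lt hxr
  replace hr1 : ‖(r : 𝕜)‖ < 1 := by rwa [RCLike.norm_ofReal, abs_of_pos hr0]
  have hnc : (fun n : ℕ ↦ (n : 𝕜) * c n) =O[atTop] fun n ↦ ((n ^ (k + 1) : ℕ) : 𝕜) := by
    simpa [pow_succ'] using (isBigO_refl (fun n : ℕ ↦ (n : 𝕜)) atTop).mul hc
  have hu := (summable_norm_mul_geometric_of_norm_lt_one' hr1 hnc).div_const r
  have hck : (fun n ↦ c n) =O[atTop] fun n ↦ ((n ^ k : ℕ) : 𝕜) := by simpa using hc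
  have hbound : ∀ n, ∀ y ∈ Metric.ball (0 : 𝕜) r,
      ‖c n * (n * y ^ (n - 1))‖ ≤ ‖(n : 𝕜) * c n * (r : 𝕜) ^ n‖ / r := by
    intro n y hy
    rw [mem_ball_zero_iff] at hy
    rw [le_div_iff₀ hr0]
    simp only [norm_mul, norm_pow, RCLike.norm_natCast, RCLike.norm_ofReal, abs_of_pos hr0]
    rcases n with _ | n
    · simp
    · have hyn := pow_le_pow_left₀ (norm_nonneg y) hy.le n
      calc _ = ((n + 1 : ℕ) : ℝ) * ‖c (n + 1)‖ * ‖y‖ ^ n * r := by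
            simp only [Nat.add_sub_cancel]; ring
        _ ≤ ((n + 1 : ℕ) : ℝ) * ‖c (n + 1)‖ * r ^ n * r := by gcongr
        _ = _ := by ring
  have H := hasDerivAt_tsum_of_isPreconnected hu Metric.isOpen_ball
    (convex_ball (0 : 𝕜) r).isPreconnected (fun n y _ ↦ (hasDerivAt_pow n y).const_mul (c n))
    hbound (mem_ball_zero_iff.2 hxr)
    (summable_norm_mul_geometric_of_norm_lt_one' hx hck).of_norm (mem_ball_zero_iff.2 hxr)
  refine H.congr_deriv ?_
  rw [(Summable.of_norm_bounded hu fun n ↦ hbound n x (mem_ball_zero_iff.2 hxr)).tsum_eq_zero_add]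
  simp only [Nat.cast_zero, zero_mul, mul_zero, zero_add, Nat.add_sub_cancel, Nat.cast_add_one]
  exact tsum_congr fun n ↦ by ring

theorem tsum_sum_range_mul_pow {R : Type*} [NormedField R] [CompleteSpace R] {a : ℕ → R} {x : R}
    (ha : Summable fun n ↦ ‖a n * x ^ n‖) (hx : ‖x‖ < 1) :
    ∑' n, (∑ j ∈ range (n + 1), a j) * x ^ n = (∑' n, a n * x ^ n) / (1 - x) := by
  rw [div_eq_mul_inv, ← tsum_geometric_of_norm_lt_one hx,
    tsum_mul_tsum_eq_tsum_sum_range_of_summable_norm ha (summable_norm_geometric_of_norm_lt_one hx)]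
  refine tsum_congr fun n ↦ ?_
  rw [sum_mul]
  refine sum_congr rfl fun j hj ↦ ?_
  rw [mul_assoc, ← pow_add, Nat.add_sub_cancel' (Nat.lt_succ_iff.1 (mem_range.1 hj))]

theorem exists_abs_mpolylogCoeff_le_pow (L : List ℤ) :
    ∃ m : ℕ, ∀ n, |mpolylogCoeff L n| ≤ (n : ℝ) ^ m := by
  induction L with
  | nil => exact ⟨0, fun n ↦ by cases n <;> simp [mpolylogCoeff]⟩
  | cons k ks ih =>
    obtain ⟨m, hm⟩ := ih
    refine ⟨m + 1 + (-k).toNat, fun n ↦ ?_⟩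
    rcases n with _ | n
    · simp [mpolylogCoeff]
    set N : ℝ := ((n + 1 : ℕ) : ℝ)
    have hN : 1 ≤ N := by simp [N]
    have hsum : |∑ j ∈ range (n + 1), mpolylogCoeff ks j| ≤ N ^ (m + 1) :=
      calc |∑ j ∈ range (n + 1), mpolylogCoeff ks j|
          ≤ ∑ j ∈ range (n + 1), |mpolylogCoeff ks j| := abs_sum_le_sum_abs _ _
        _ ≤ ∑ _j ∈ range (n + 1), N ^ m := by
          refine sum_le_sum fun j hj ↦ (hm j).trans (pow_le_pow_left₀ (by positivity) ?_ m)
          simp only [N]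
          exact_mod_cast (mem_range.1 hj).le
        _ = N ^ (m + 1) := by simp [N, pow_succ']
    have hzpow : N ^ (-k) ≤ N ^ (-k).toNat := by
      rw [← zpow_natCast]
      exact zpow_le_zpow_right₀ hN (Int.self_le_toNat (-k))
    calc |mpolylogCoeff (k :: ks) (n + 1)|
        = |∑ j ∈ range (n + 1), mpolylogCoeff ks j| * N ^ (-k) := by
          change |(∑ j ∈ range (n + 1), mpolylogCoeff ks j) / N ^ k| = _
          rw [abs_div, abs_of_pos (zpow_pos (zero_lt_one.trans_le hN) k), div_eq_mul_inv,
            ← zpow_neg]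
      _ ≤ N ^ (m + 1) * N ^ (-k).toNat := by gcongr
      _ = N ^ (m + 1 + (-k).toNat) := (pow_add _ _ _).symm

theorem exists_mpolylogCoeff_isBigO_pow (L : List ℤ) :
    ∃ m : ℕ, mpolylogCoeff L =O[atTop] fun n ↦ (n : ℝ) ^ m := by
  obtain ⟨m, hm⟩ := exists_abs_mpolylogCoeff_le_pow L
  exact ⟨m, .of_bound' (.of_forall fun n ↦ by simpa using hm n)⟩

theorem succ_mul_mpolylogCoeff_one_cons (L : List ℤ) (n : ℕ) :
    ((n : ℝ) + 1) * mpolylogCoeff (1 :: L) (n + 1) = ∑ j ∈ range (n + 1), mpolylogCoeff L j := by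
  rw [mpolylogCoeff, zpow_one]
  push_cast
  field_simp

/-- For `k_r = 1`, `d/dx Li_{k_1,…,k_{r-1},1}(x) = Li_{k_1,…,k_{r-1}}(x)/(1-x)` for `|x| < 1`.
Here `ks = [k_1,…,k_{r-1}]`. -/
theorem mpolylog_hasDerivAt_last_one (ks : List ℤ) (x : ℝ) (hx : |x| < 1) :
    HasDerivAt (mpolylog (ks ++ [1])) (mpolylog ks x / (1 - x)) x := by
  have hx' : ‖x‖ < 1 := by rwa [Real.norm_eq_abs]
  obtain ⟨m, hm⟩ := exists_mpolylogCoeff_isBigO_pow (1 :: ks.reverse)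
  obtain ⟨m', hm'⟩ := exists_mpolylogCoeff_isBigO_pow ks.reverse
  have hsum : Summable fun n ↦ ‖mpolylogCoeff ks.reverse n * x ^ n‖ :=
    summable_norm_mul_geometric_of_norm_lt_one' hx' (by simpa using hm')
  have hfun : mpolylog (ks ++ [1]) = fun y ↦ ∑' n, mpolylogCoeff (1 :: ks.reverse) n * y ^ n := by
    funext y
    simp [mpolylog]
  rw [hfun, mpolylog, ← tsum_sum_range_mul_pow hsum hx']
  simpa only [succ_mul_mpolylogCoeff_one_cons] using hasDerivAt_tsum_mul_pow hm hx'
end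

section
/- For real x with |x| < 1, Li_{1,1}(x) = (1/2)(log(1-x))^2, where Li_{1,1}(x) = ∑_{0 < n_1 < n_2} x^{n_2}/(n_1 n_2). -/
/-!
Since `Li_1(x) = ∑ xⁿ/n = -log(1-x)` converges absolutely for `|x| < 1`, its Cauchy square has
`n`-th coefficient `∑_{a+b=n} 1/(ab)`. Writing `1/(ab) = (1/n)(1/a + 1/b)` and using the symmetry
`a ↔ b`, this is `(2/n) ∑_{0<j<n} 1/j`, i.e. twice the coefficient of `xⁿ` in `Li_{1,1}(x)`.
-/

open scoped BigOperators

open Finset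

theorem sum_antidiagonal_inv_mul_inv {K : Type*} [Field K] [CharZero K] (n : ℕ) :
    ∑ p ∈ antidiagonal n, (p.1 : K)⁻¹ * (p.2 : K)⁻¹ = 2 * (∑ j ∈ range n, (j : K)⁻¹) / n := by
  rcases n.eq_zero_or_pos with rfl | hn
  · simp
  -- `n a⁻¹ b⁻¹ = a⁻¹ (b⁻¹ b) + b⁻¹ (a⁻¹ a)` when `a + b = n`, even if `a` or `b` is `0`.
  have half : ∑ p ∈ antidiagonal n, (p.1 : K)⁻¹ * ((p.2 : K)⁻¹ * p.2) = ∑ j ∈ range n, (j : K)⁻¹ := by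
    rw [Nat.sum_antidiagonal_eq_sum_range_succ (fun a b => (a : K)⁻¹ * ((b : K)⁻¹ * b)),
      sum_range_succ, Nat.sub_self, Nat.cast_zero, mul_zero, mul_zero, add_zero]
    refine sum_congr rfl fun k hk => ?_
    rw [inv_mul_cancel₀ (Nat.cast_ne_zero.mpr (Nat.sub_ne_zero_of_lt (mem_range.mp hk))), mul_one]
  rw [eq_div_iff (Nat.cast_ne_zero.mpr hn.ne'), sum_mul]
  calc ∑ p ∈ antidiagonal n, (p.1 : K)⁻¹ * (p.2 : K)⁻¹ * n
      = ∑ p ∈ antidiagonal n, ((p.1 : K)⁻¹ * ((p.2 : K)⁻¹ * p.2) +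
          (p.2 : K)⁻¹ * ((p.1 : K)⁻¹ * p.1)) := by
        refine sum_congr rfl fun p hp => ?_
        rw [← mem_antidiagonal.mp hp, Nat.cast_add]
        ring
    _ = 2 * ∑ j ∈ range n, (j : K)⁻¹ := by
        rw [sum_add_distrib, half, ← Nat.sum_antidiagonal_swap]
        simp only [Prod.fst_swap, Prod.snd_swap, half]
        ring

/-- Also at `n = 0`, thanks to the convention `(0 : ℝ)⁻¹ = 0`. -/
theorem mpolylogCoeff_one (n : ℕ) : mpolylogCoeff [1] n = (n : ℝ)⁻¹ := by
  cases n with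
  | zero => simp [mpolylogCoeff]
  | succ n =>
    have : ∑ j ∈ range (n + 1), mpolylogCoeff [] j = 1 := by
      rw [sum_range_succ']; simp [mpolylogCoeff]
    simp [mpolylogCoeff, this]

theorem mpolylogCoeff_one_one (n : ℕ) :
    mpolylogCoeff [1, 1] n = (∑ j ∈ range n, (j : ℝ)⁻¹) / n := by
  cases n with
  | zero => simp [mpolylogCoeff]
  | succ n => simp [mpolylogCoeff, mpolylogCoeff_one]

theorem sum_antidiagonal_inv_mul_pow_mul (x : ℝ) (n : ℕ) :
    ∑ p ∈ antidiagonal n, ((p.1 : ℝ)⁻¹ * x ^ p.1) * ((p.2 : ℝ)⁻¹ * x ^ p.2) =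
      2 * (mpolylogCoeff [1, 1] n * x ^ n) := by
  calc _ = ∑ p ∈ antidiagonal n, (p.1 : ℝ)⁻¹ * (p.2 : ℝ)⁻¹ * x ^ n :=
        sum_congr rfl fun p hp => by rw [← mem_antidiagonal.mp hp, pow_add]; ring
    _ = _ := by rw [← sum_mul, sum_antidiagonal_inv_mul_inv, mpolylogCoeff_one_one]; ring

theorem hasSum_inv_mul_pow_neg_log {x : ℝ} (hx : |x| < 1) :
    HasSum (fun n : ℕ => (n : ℝ)⁻¹ * x ^ n) (-Real.log (1 - x)) := by
  rw [← hasSum_nat_add_iff' 1]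
  simpa [div_eq_inv_mul] using Real.hasSum_pow_div_log_of_abs_lt_one hx

/-- For `|x| < 1`, `Li_{1,1}(x) = (1/2)(log(1-x))^2`. -/
theorem mpolylog_one_one (x : ℝ) (hx : |x| < 1) :
    mpolylog [1, 1] x = (1 / 2) * (Real.log (1 - x)) ^ 2 := by
  set f : ℕ → ℝ := fun n => (n : ℝ)⁻¹ * x ^ n
  have hf : HasSum f (-Real.log (1 - x)) := hasSum_inv_mul_pow_neg_log hx
  have hf_norm : Summable fun n => ‖f n‖ := by
    simpa [f, abs_mul, abs_inv] using (hasSum_inv_mul_pow_neg_log (x := |x|) (by simpa)).summable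
  calc mpolylog [1, 1] x = ∑' n, mpolylogCoeff [1, 1] n * x ^ n := rfl
    _ = (1 / 2) * ∑' n, ∑ p ∈ antidiagonal n, f p.1 * f p.2 := by
        simp only [f, sum_antidiagonal_inv_mul_pow_mul, tsum_mul_left]
        ring
    _ = (1 / 2) * ((∑' n, f n) * ∑' n, f n) := by
        rw [tsum_mul_tsum_eq_tsum_sum_antidiagonal_of_summable_norm hf_norm hf_norm]
    _ = (1 / 2) * (Real.log (1 - x)) ^ 2 := by rw [hf.tsum_eq]; ring
end

section
/- For real x with |x| < 1 and integer k_1, the identity Li_{k_1,1}(x) = ∫₀ˣ Li_{k_1}(u)/(1-u) du holds. -/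
open scoped BigOperators

/-!
Multiplying `Li_k(u) = ∑ cₙ uⁿ` by the geometric series gives `Li_k(u)/(1-u) = ∑ Hₙ uⁿ` with
`Hₙ = ∑_{j ≤ n} c_j`. Since the coefficients grow polynomially, for `|x| < 1` the series may be
integrated termwise over `[0, x]`, giving `∑ Hₙ x^{n+1}/(n+1)`; and `Hₙ/(n+1)` is exactly the
coefficient of `x^{n+1}` in `Li_{k,1}(x)`.
-/

open Finset MeasureTheory
open scoped Interval

lemma sum_range_mpolylogCoeff_nil (n : ℕ) : ∑ j ∈ range (n + 1), mpolylogCoeff [] j = 1 := by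
  simp [sum_range_succ', mpolylogCoeff]

lemma mpolylogCoeff_singleton_succ (k : ℤ) (n : ℕ) :
    mpolylogCoeff [k] (n + 1) = ((n + 1 : ℕ) : ℝ) ^ (-k) := by
  rw [mpolylogCoeff, sum_range_mpolylogCoeff_nil, one_div, zpow_neg]

lemma abs_mpolylogCoeff_singleton_le (k : ℤ) (n : ℕ) :
    |mpolylogCoeff [k] n| ≤ ((n : ℝ) + 1) ^ k.natAbs := by
  cases n with
  | zero => simp [mpolylogCoeff]
  | succ n =>
    have h1 : (1 : ℝ) ≤ ((n + 1 : ℕ) : ℝ) := by norm_cast; omega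
    rw [mpolylogCoeff_singleton_succ, abs_of_pos (by positivity)]
    calc ((n + 1 : ℕ) : ℝ) ^ (-k) ≤ ((n + 1 : ℕ) : ℝ) ^ (k.natAbs : ℤ) :=
          zpow_le_zpow_right₀ h1 (by omega)
      _ ≤ ((n + 1 : ℕ) + 1) ^ k.natAbs := by rw [zpow_natCast]; gcongr; linarith

lemma mpolylogCoeff_one_cons_succ (ks : List ℤ) (n : ℕ) :
    mpolylogCoeff (1 :: ks) (n + 1) = (∑ j ∈ range (n + 1), mpolylogCoeff ks j) / (n + 1) := by
  rw [mpolylogCoeff, zpow_one]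
  push_cast
  rfl

lemma summable_add_one_pow_mul_geometric (m : ℕ) {r : ℝ} (hr : ‖r‖ < 1) :
    Summable fun n : ℕ => ((n : ℝ) + 1) ^ m * r ^ n := by
  have h : (fun n : ℕ => ((n : ℝ) + 1) ^ m * r ^ n) =
      fun n : ℕ => ∑ i ∈ range (m + 1), (m.choose i : ℝ) * ((n : ℝ) ^ i * r ^ n) := by
    funext n
    rw [add_pow, sum_mul]
    exact sum_congr rfl fun i _ => by ring
  rw [h]
  exact summable_sum fun i _ => (summable_pow_mul_geometric_of_norm_lt_one i hr).mul_left _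

lemma summable_abs_mul_pow_of_abs_le {a : ℕ → ℝ} {m : ℕ} (ha : ∀ n, |a n| ≤ ((n : ℝ) + 1) ^ m)
    {y : ℝ} (hy : |y| < 1) : Summable fun n => |a n| * |y| ^ n :=
  (summable_add_one_pow_mul_geometric m (by rwa [Real.norm_eq_abs, abs_abs])).of_nonneg_of_le
    (fun n => by positivity) fun n => by gcongr; exact ha n

lemma abs_sum_range_le_of_abs_le {a : ℕ → ℝ} {m : ℕ} (ha : ∀ n, |a n| ≤ ((n : ℝ) + 1) ^ m)
    (n : ℕ) : |∑ j ∈ range (n + 1), a j| ≤ ((n : ℝ) + 1) ^ (m + 1) :=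
  calc |∑ j ∈ range (n + 1), a j| ≤ ∑ j ∈ range (n + 1), |a j| := abs_sum_le_sum_abs _ _
    _ ≤ ∑ _j ∈ range (n + 1), ((n : ℝ) + 1) ^ m := by
      refine sum_le_sum fun j hj => (ha j).trans ?_
      have : (j : ℝ) ≤ n := by exact_mod_cast Nat.lt_succ_iff.mp (mem_range.mp hj)
      gcongr
    _ = ((n : ℝ) + 1) ^ (m + 1) := by simp [pow_succ']

lemma hasSum_sum_range_mul_pow_of_summable_norm {𝕜 : Type*} [NormedField 𝕜] [CompleteSpace 𝕜]
    {c : ℕ → 𝕜} {y : 𝕜} (hc : Summable fun n => ‖c n * y ^ n‖) (hy : ‖y‖ < 1) :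
    HasSum (fun n => (∑ j ∈ range (n + 1), c j) * y ^ n) ((∑' n, c n * y ^ n) / (1 - y)) := by
  have h := hasSum_sum_range_mul_of_summable_norm hc (summable_norm_geometric_of_norm_lt_one hy)
  rw [tsum_geometric_of_norm_lt_one hy, ← div_eq_mul_inv] at h
  convert h using 2 with n
  rw [sum_mul]
  refine sum_congr rfl fun j hj => ?_
  rw [mul_assoc, ← pow_add, Nat.add_sub_cancel' (Nat.lt_succ_iff.mp (mem_range.mp hj))]

lemma abs_le_abs_of_mem_uIoc_zero {x u : ℝ} (hu : u ∈ Ι 0 x) : |u| ≤ |x| := by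
  simpa using Set.abs_sub_left_of_mem_uIcc (Set.uIoc_subset_uIcc hu)

lemma hasSum_intervalIntegral_mul_pow {a : ℕ → ℝ} {f : ℝ → ℝ} {x : ℝ}
    (ha : Summable fun n => |a n| * |x| ^ n)
    (hf : ∀ u ∈ Ι 0 x, HasSum (fun n => a n * u ^ n) (f u)) :
    HasSum (fun n => a n * x ^ (n + 1) / (n + 1)) (∫ u in (0 : ℝ)..x, f u) := by
  have h := intervalIntegral.hasSum_integral_of_dominated_convergence
    (μ := volume) (F := fun n u => a n * u ^ n) (fun n _ => |a n| * |x| ^ n)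
    (fun n => (by fun_prop : Continuous fun u : ℝ => a n * u ^ n).aestronglyMeasurable)
    (fun n => ae_of_all _ fun u hu => ?_) (ae_of_all _ fun _ _ => ha) intervalIntegrable_const
    (ae_of_all _ hf)
  · simpa [integral_pow, mul_div_assoc] using h
  · rw [Real.norm_eq_abs, abs_mul, abs_pow]
    have := abs_le_abs_of_mem_uIoc_zero hu
    gcongr

/-- For `|x| < 1` and an integer `k₁`: `Li_{k₁,1}(x) = ∫₀ˣ Li_{k₁}(u)/(1-u) du`. -/
theorem mpolylog_k_one_eq_integral (k₁ : ℤ) (x : ℝ) (hx : |x| < 1) :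
    mpolylog [k₁, 1] x = ∫ u in (0 : ℝ)..x, mpolylog [k₁] u / (1 - u) := by
  have hc := abs_mpolylogCoeff_singleton_le k₁
  have hLi : ∀ u ∈ Ι 0 x, HasSum (fun n => (∑ j ∈ range (n + 1), mpolylogCoeff [k₁] j) * u ^ n)
      (mpolylog [k₁] u / (1 - u)) := by
    intro u hu
    have hu : |u| < 1 := (abs_le_abs_of_mem_uIoc_zero hu).trans_lt hx
    exact hasSum_sum_range_mul_pow_of_summable_norm
      (by simpa [abs_mul] using summable_abs_mul_pow_of_abs_le hc hu) hu
  have h := hasSum_intervalIntegral_mul_pow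
    (summable_abs_mul_pow_of_abs_le (abs_sum_range_le_of_abs_le hc) hx) hLi
  refine ((hasSum_nat_add_iff' 1).mp ?_).tsum_eq
  simpa [mpolylogCoeff_one_cons_succ, mpolylogCoeff, div_mul_eq_mul_div] using h
end
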